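/- Let n ≥ 2 and let {W(t)}_{t≥0} be a sequence of column-stochastic n×n matrices, each of out-degree form, having the directed infinite flow property. Then for the push-sum iterates, for every t ≥ 0 and every i ∈ [n], |z_i(t+1) − x̄| ≤ (2‖x(0)‖₁ / y_i(t+1)) · Λ_{t,0}, where Λ_{t,0} = ∏_{q∈Q_{t,0}} (1 − 1/n^{ℓ_q}) and each factor 1 − 1/n^{ℓ_q} lies in (0,1). -/

import Mathlib

open Finset MeasureTheory

/-- `A_{S S̄} = ∑_{i ∈ S, j ∉ S} A i j`. -/
def flowSum {n : ℕ} (A : Matrix (Fin n) (Fin n) ℝ) (S : Finset (Fin n)) : ℝ :=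
  ∑ i ∈ S, ∑ j ∈ Sᶜ, A i j

/-- `S` is a nontrivial subset of `[n]`. -/
def NontrivialSubset {n : ℕ} (S : Finset (Fin n)) : Prop :=
  S.Nonempty ∧ S ≠ Finset.univ

/-- Directed infinite flow property: for every nontrivial `S`, `∑_t A_{S S̄}(t) = ∞`. -/
def DirectedInfiniteFlow {n : ℕ} (A : ℕ → Matrix (Fin n) (Fin n) ℝ) : Prop :=
  ∀ S : Finset (Fin n), NontrivialSubset S →
    Filter.Tendsto (fun T => ∑ t ∈ Finset.range T, flowSum (A t) S)
      Filter.atTop Filter.atTop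

/-- The backward product `A(t:s) = A(t) A(t-1) ⋯ A(s)`. -/
def matProd {n : ℕ} (A : ℕ → Matrix (Fin n) (Fin n) ℝ) (t s : ℕ) :
    Matrix (Fin n) (Fin n) ℝ :=
  (((List.range (t + 1 - s)).map fun k => A (t - k))).prod

/-- Row-stochastic nonnegative matrix. -/
def RowStochastic {n : ℕ} (A : Matrix (Fin n) (Fin n) ℝ) : Prop :=
  (∀ i j, 0 ≤ A i j) ∧ ∀ i, ∑ j, A i j = 1

/-- Column-stochastic nonnegative matrix. -/
def ColStochastic {n : ℕ} (A : Matrix (Fin n) (Fin n) ℝ) : Prop :=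
  (∀ i j, 0 ≤ A i j) ∧ ∀ j, ∑ i, A i j = 1

/-- `W` is the degree-normalized adjacency matrix of a digraph with all self-loops:
`W i j = 1 / (out-degree of j)` if there is an edge from `j` to `i`, else `0`. -/
def OutDegreeForm {n : ℕ} (W : Matrix (Fin n) (Fin n) ℝ) : Prop :=
  ∃ N : Fin n → Finset (Fin n), (∀ j, j ∈ N j) ∧
    ∀ i j, W i j = if i ∈ N j then (1 : ℝ) / (N j).card else 0

/-- Strong aperiodicity of a sequence of matrices. -/
def StronglyAperiodic {n : ℕ} (A : ℕ → Matrix (Fin n) (Fin n) ℝ) : Prop :=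
  ∃ γ : ℝ, 0 < γ ∧ ∀ t i, γ ≤ A t i i

/-- The times `k_q`: `k_0 = 0` and `k_q` is the least `t' > k_{q-1}` with
nonzero flow `∑_{t=k_{q-1}}^{t'-1} A_{S S̄}(t) > 0` across every nontrivial cut. -/
noncomputable def kSeq {n : ℕ} (A : ℕ → Matrix (Fin n) (Fin n) ℝ) : ℕ → ℕ
  | 0 => 0
  | q + 1 => sInf {t' : ℕ | kSeq A q < t' ∧ ∀ S : Finset (Fin n), NontrivialSubset S →
      0 < ∑ t ∈ Finset.Ico (kSeq A q) t', flowSum (A t) S}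

/-- `ℓ_q = k_{qn} - k_{(q-1)n}`. -/
noncomputable def ellSeq {n : ℕ} (A : ℕ → Matrix (Fin n) (Fin n) ℝ) (q : ℕ) : ℕ :=
  kSeq A (q * n) - kSeq A ((q - 1) * n)

/-- The index set `Q_{t,s} = {q ≥ 1 : s ≤ k_{(q-1)n}, k_{qn} ≤ t}` (as a `Finset`). -/
noncomputable def QSet {n : ℕ} (A : ℕ → Matrix (Fin n) (Fin n) ℝ) (t s : ℕ) :
    Finset ℕ :=
  (Finset.Icc 1 t).filter fun q => s ≤ kSeq A ((q - 1) * n) ∧ kSeq A (q * n) ≤ t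

/-- `Λ_{t,s} = ∏_{q ∈ Q_{t,s}} (1 - 1/n^{ℓ_q})`. -/
noncomputable def Lam {n : ℕ} (A : ℕ → Matrix (Fin n) (Fin n) ℝ) (t s : ℕ) : ℝ :=
  ∏ q ∈ QSet A t s, (1 - 1 / (n : ℝ) ^ (ellSeq A q))

/-- Push-sum iterates: `u(0) = u0`, `u(t+1) = W(t) u(t)`. -/
def pushIter {n : ℕ} (W : ℕ → Matrix (Fin n) (Fin n) ℝ) (u0 : Fin n → ℝ) : ℕ → Fin n → ℝ
  | 0 => u0
  | t + 1 => (W t).mulVec (pushIter W u0 t)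

/-- A nonnegative matrix is irreducible if the digraph with an edge from `j` to `i`
whenever `A i j > 0` is strongly connected. -/
def IrreducibleMat {n : ℕ} (A : Matrix (Fin n) (Fin n) ℝ) : Prop :=
  ∀ i j : Fin n, Relation.ReflTransGen (fun a b => 0 < A b a) i j

/-!
Write `x(t+1) = P x(0)` with `P = W(t) ⋯ W(0)`, so that `y_i(t+1) = ∑_j P_ij` and
`z_i(t+1) - x̄ = ∑_j x_j (P_ij / y_i(t+1) - 1/n)`: it suffices that the entries of row `i` of `P`
differ by at most `Λ_{t,0}`.

All `W(s)` have positive diagonals, so the positive entries of a column of a product can only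
spread, and across a window `[k_q, k_{q+1})` they do spread, since there every cut carries flow.
Hence the product over `n` consecutive windows, i.e. over `[k_{(q-1)n}, k_{qn})`, is entrywise
positive, and its entries are at least `n^{-ℓ_q}` since the nonzero entries of an out-degree
matrix are at least `1/n`. Multiplying a row vector by a column-stochastic matrix with entries
at least `δ` shrinks its spread by the factor `1 - δ`, which yields one factor of `Λ_{t,0}` per
block.
-/

open Matrix

/-- `windowProd W s t = W (t - 1) * ⋯ * W s`. -/
def windowProd {M : Type*} [Monoid M] (W : ℕ → M) (s t : ℕ) : M :=
  ((List.range' s (t - s)).reverse.map W).prod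

section WindowProd

variable {M : Type*} [Monoid M] (W : ℕ → M)

@[simp]
lemma windowProd_self (s : ℕ) : windowProd W s s = 1 := by
  simp [windowProd]

lemma windowProd_split {s r t : ℕ} (hsr : s ≤ r) (hrt : r ≤ t) :
    windowProd W s t = windowProd W r t * windowProd W s r := by
  obtain ⟨a, rfl⟩ := Nat.exists_eq_add_of_le hsr
  obtain ⟨b, rfl⟩ := Nat.exists_eq_add_of_le hrt
  simp only [windowProd, show s + a + b - s = a + b by omega, Nat.add_sub_cancel_left,
    ← List.range'_append, Nat.one_mul, List.reverse_append, List.map_append, List.prod_append]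

lemma windowProd_succ {s t : ℕ} (h : s ≤ t) :
    windowProd W s (t + 1) = W t * windowProd W s t := by
  rw [windowProd_split W h t.le_succ]
  simp [windowProd]

lemma windowProd_induction (p : M → Prop) (hmul : ∀ a b, p a → p b → p (a * b)) (hone : p 1)
    (hW : ∀ t, p (W t)) (s t : ℕ) : p (windowProd W s t) :=
  List.prod_induction p hmul hone <| by
    simp only [List.mem_map]
    rintro _ ⟨t, -, rfl⟩
    exact hW t

lemma windowProd_comp_monotone {k : ℕ → ℕ} (hk : Monotone k) {a b : ℕ} (hab : a ≤ b) :
    windowProd W (k a) (k b) = windowProd (fun q => windowProd W (k q) (k (q + 1))) a b := by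
  induction b, hab using Nat.le_induction with
  | base => simp
  | succ b hab ih =>
    rw [windowProd_split W (hk hab) (hk b.le_succ), ih, windowProd_succ _ hab]

end WindowProd

lemma pushIter_eq_windowProd_mulVec {n : ℕ} (W : ℕ → Matrix (Fin n) (Fin n) ℝ)
    (u0 : Fin n → ℝ) (t : ℕ) : pushIter W u0 t = windowProd W 0 t *ᵥ u0 := by
  induction t with
  | zero => simp [pushIter]
  | succ t ih => rw [pushIter, ih, windowProd_succ W t.zero_le, mulVec_mulVec]

lemma exists_pos_of_sum_pos {ι : Type*} {s : Finset ι} {f : ι → ℝ}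
    (h : 0 < ∑ i ∈ s, f i) : ∃ i ∈ s, 0 < f i :=
  exists_lt_of_sum_lt (by simpa using h)

section Nonneg

variable {ι : Type*} [Fintype ι] {A B : Matrix ι ι ℝ}

lemma mul_apply_nonneg (hA : ∀ i j, 0 ≤ A i j) (hB : ∀ i j, 0 ≤ B i j) (i j : ι) :
    0 ≤ (A * B) i j :=
  sum_nonneg fun k _ => mul_nonneg (hA i k) (hB k j)

lemma single_le_mul_apply (hA : ∀ i j, 0 ≤ A i j) (hB : ∀ i j, 0 ≤ B i j) (i k j : ι) :
    A i k * B k j ≤ (A * B) i j :=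
  single_le_sum (f := fun k => A i k * B k j) (fun k _ => mul_nonneg (hA i k) (hB k j))
    (mem_univ k)

lemma exists_pos_of_mul_apply_pos (hA : ∀ i j, 0 ≤ A i j) (hB : ∀ i j, 0 ≤ B i j) {i j : ι}
    (h : 0 < (A * B) i j) : ∃ k, 0 < A i k ∧ 0 < B k j := by
  obtain ⟨k, -, hk⟩ := (sum_pos_iff_of_nonneg fun k _ =>
    mul_nonneg (hA i k) (hB k j)).1 h
  exact ⟨k, pos_of_mul_pos_left hk (hB k j), pos_of_mul_pos_right hk (hA i k)⟩

lemma le_mul_apply_of_pos {a b : ℝ} (hb : 0 ≤ b) (hA : ∀ i j, 0 ≤ A i j)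
    (hB : ∀ i j, 0 ≤ B i j) (ha : ∀ i j, 0 < A i j → a ≤ A i j)
    (hb' : ∀ i j, 0 < B i j → b ≤ B i j) {i j : ι} (h : 0 < (A * B) i j) :
    a * b ≤ (A * B) i j := by
  obtain ⟨k, hAk, hBk⟩ := exists_pos_of_mul_apply_pos hA hB h
  exact (mul_le_mul (ha i k hAk) (hb' k j hBk) hb (hA i k)).trans
    (single_le_mul_apply hA hB i k j)

end Nonneg

section PosDiag

variable {ι : Type*}

def NonnegPosDiag (A : Matrix ι ι ℝ) : Prop :=
  (∀ i j, 0 ≤ A i j) ∧ ∀ i, 0 < A i i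

lemma nonnegPosDiag_one [DecidableEq ι] : NonnegPosDiag (1 : Matrix ι ι ℝ) :=
  ⟨fun i j => by by_cases h : i = j <;> simp [one_apply, h], fun i => by simp⟩

lemma NonnegPosDiag.sum_apply_pos [Fintype ι] {A : Matrix ι ι ℝ} (hA : NonnegPosDiag A)
    (i : ι) : 0 < ∑ j, A i j :=
  (hA.2 i).trans_le (single_le_sum (fun j _ => hA.1 i j) (mem_univ i))

lemma NonnegPosDiag.mul [Fintype ι] {A B : Matrix ι ι ℝ} (hA : NonnegPosDiag A)
    (hB : NonnegPosDiag B) : NonnegPosDiag (A * B) :=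
  ⟨mul_apply_nonneg hA.1 hB.1, fun i =>
    (mul_pos (hA.2 i) (hB.2 i)).trans_le (single_le_mul_apply hA.1 hB.1 i i i)⟩

variable [Fintype ι] [DecidableEq ι] {W : ℕ → Matrix ι ι ℝ}

lemma NonnegPosDiag.windowProd (hW : ∀ t, NonnegPosDiag (W t)) (s t : ℕ) :
    NonnegPosDiag (windowProd W s t) :=
  windowProd_induction W _ (fun _ _ => NonnegPosDiag.mul) nonnegPosDiag_one hW s t

lemma windowProd_apply_nonneg (hW : ∀ t i j, 0 ≤ W t i j) (s t : ℕ) :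
    ∀ i j, 0 ≤ windowProd W s t i j :=
  windowProd_induction W (fun A => ∀ i j, 0 ≤ A i j) (fun _ _ => mul_apply_nonneg)
    nonnegPosDiag_one.1 hW s t

lemma pow_le_windowProd_apply_of_pos {c : ℝ} (hc : 0 ≤ c) (hW : ∀ t i j, 0 ≤ W t i j)
    (hWc : ∀ t i j, 0 < W t i j → c ≤ W t i j) {s t : ℕ} (hst : s ≤ t) :
    ∀ i j, 0 < windowProd W s t i j → c ^ (t - s) ≤ windowProd W s t i j := by
  induction t, hst using Nat.le_induction with
  | base =>
    intro i j h
    by_cases hij : i = j <;> simp_all [one_apply]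
  | succ t hst ih =>
    rw [windowProd_succ W hst, show t + 1 - s = (t - s) + 1 by omega, pow_succ']
    exact fun i j => le_mul_apply_of_pos (pow_nonneg hc _) (hW t)
      (windowProd_apply_nonneg hW s t) (hWc t) ih

end PosDiag

section ColSupport

variable {ι : Type*} [Fintype ι]

open scoped Classical in
noncomputable def colSupport (M : Matrix ι ι ℝ) (j : ι) : Finset ι :=
  univ.filter fun i => 0 < M i j

lemma mem_colSupport {M : Matrix ι ι ℝ} {i j : ι} : i ∈ colSupport M j ↔ 0 < M i j := by
  simp [colSupport]

lemma colSupport_subset_mul {B M : Matrix ι ι ℝ} (hB : NonnegPosDiag B)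
    (hM : ∀ i j, 0 ≤ M i j) (j : ι) : colSupport M j ⊆ colSupport (B * M) j := fun i hi =>
  mem_colSupport.2 <| (mul_pos (hB.2 i) (mem_colSupport.1 hi)).trans_le
    (single_le_mul_apply hB.1 hM i i j)

end ColSupport

section Cuts

variable {n : ℕ}

def CrossesEveryCut (M : Matrix (Fin n) (Fin n) ℝ) : Prop :=
  ∀ S : Finset (Fin n), NontrivialSubset S → ∃ i ∈ S, ∃ j ∈ Sᶜ, 0 < M i j

lemma colSupport_ssubset_mul {B M : Matrix (Fin n) (Fin n) ℝ} (hB : NonnegPosDiag B)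
    (hcut : CrossesEveryCut B) (hM : ∀ i j, 0 ≤ M i j) {j : Fin n}
    (hne : (colSupport M j).Nonempty) (hne' : colSupport M j ≠ univ) :
    colSupport M j ⊂ colSupport (B * M) j := by
  have hS : NontrivialSubset (colSupport M j)ᶜ :=
    ⟨by simpa [nonempty_iff_ne_empty] using hne',
      fun h => hne.ne_empty ((compl_eq_univ_iff _).1 h)⟩
  obtain ⟨i, hi, k, hk, hik⟩ := hcut _ hS
  rw [compl_compl] at hk
  refine (ssubset_iff_of_subset (colSupport_subset_mul hB hM j)).2 ⟨i, ?_, mem_compl.1 hi⟩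
  exact mem_colSupport.2 <| (mul_pos hik (mem_colSupport.1 hk)).trans_le
    (single_le_mul_apply hB.1 hM i k j)

lemma min_le_card_colSupport_windowProd {B : ℕ → Matrix (Fin n) (Fin n) ℝ}
    (hB : ∀ q, NonnegPosDiag (B q)) (hcut : ∀ q, CrossesEveryCut (B q)) (d : ℕ) (j : Fin n) :
    min (d + 1) n ≤ #(colSupport (windowProd B 0 d) j) := by
  induction d with
  | zero =>
    have : j ∈ colSupport (windowProd B 0 0) j := by simp [mem_colSupport]
    have := card_pos.2 ⟨j, this⟩
    omega
  | succ d ih =>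
    have hP := NonnegPosDiag.windowProd hB 0 d
    rw [windowProd_succ B d.zero_le]
    by_cases huniv : colSupport (windowProd B 0 d) j = univ
    · have := card_le_card (huniv ▸ colSupport_subset_mul (hB d) hP.1 j)
      simp only [card_univ, Fintype.card_fin] at this
      omega
    · have hlt := card_lt_card <| colSupport_ssubset_mul (hB d) (hcut d) hP.1
        ⟨j, mem_colSupport.2 (hP.2 j)⟩ huniv
      have := card_lt_card (ssubset_univ_iff.2 huniv)
      simp only [card_univ, Fintype.card_fin] at this
      omega

lemma windowProd_apply_pos_of_crossesEveryCut {B : ℕ → Matrix (Fin n) (Fin n) ℝ}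
    (hB : ∀ q, NonnegPosDiag (B q)) (hcut : ∀ q, CrossesEveryCut (B q)) (i j : Fin n) :
    0 < windowProd B 0 n i j := by
  have hcard := min_le_card_colSupport_windowProd hB hcut n j
  rw [min_eq_right n.le_succ] at hcard
  have huniv : colSupport (windowProd B 0 n) j = univ :=
    eq_univ_of_card _ (le_antisymm (card_le_univ _) (by simpa using hcard))
  exact mem_colSupport.1 (huniv ▸ mem_univ i)

end Cuts

section Stochastic

variable {n : ℕ}

lemma colStochastic_one : ColStochastic (1 : Matrix (Fin n) (Fin n) ℝ) :=
  ⟨fun i j => by by_cases h : i = j <;> simp [one_apply, h], fun j => by simp [one_apply]⟩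

lemma ColStochastic.mul {A B : Matrix (Fin n) (Fin n) ℝ} (hA : ColStochastic A)
    (hB : ColStochastic B) : ColStochastic (A * B) := by
  refine ⟨mul_apply_nonneg hA.1 hB.1, fun j => ?_⟩
  simp only [mul_apply]
  rw [sum_comm]
  simp only [← sum_mul, hA.2, one_mul, hB.2]

lemma ColStochastic.windowProd {W : ℕ → Matrix (Fin n) (Fin n) ℝ}
    (hW : ∀ t, ColStochastic (W t)) (s t : ℕ) : ColStochastic (windowProd W s t) :=
  windowProd_induction W _ (fun _ _ => ColStochastic.mul) colStochastic_one hW s t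

lemma ColStochastic.apply_le_one {A : Matrix (Fin n) (Fin n) ℝ} (h : ColStochastic A)
    (i j : Fin n) : A i j ≤ 1 :=
  h.2 j ▸ single_le_sum (fun k _ => h.1 k j) (mem_univ i)

lemma vecMul_sub_vecMul_le {B : Matrix (Fin n) (Fin n) ℝ} (hB : ColStochastic B) {δ c : ℝ}
    (hδ : ∀ k j, δ ≤ B k j) {v : Fin n → ℝ} (hv : ∀ j j', v j - v j' ≤ c)
    (j j' : Fin n) :
    (v ᵥ* B) j - (v ᵥ* B) j' ≤ (1 - δ) * c := by
  obtain ⟨k₀, -, hk₀⟩ := exists_min_image univ v ⟨j, mem_univ j⟩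
  -- columns sum to one, so `v` may be shifted by its minimum
  have hshift : (v ᵥ* B) j - (v ᵥ* B) j' = ∑ k, (v k - v k₀) * (B k j - B k j') := by
    simp only [vecMul, dotProduct, sub_mul, mul_sub, sum_sub_distrib, ← mul_sum, hB.2]
    ring
  have hexcess : ∑ k, (B k j - min (B k j) (B k j')) ≤ 1 - δ := by
    have hoverlap : δ ≤ ∑ k, min (B k j) (B k j') :=
      (le_min (hδ j j) (hδ j j')).trans
        (single_le_sum (fun k _ => le_min (hB.1 k j) (hB.1 k j')) (mem_univ j))
    rw [sum_sub_distrib, hB.2 j]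
    linarith
  have hterm : ∀ k, (v k - v k₀) * (B k j - B k j') ≤ c * (B k j - min (B k j) (B k j')) := by
    intro k
    have hv₀ : 0 ≤ v k - v k₀ := sub_nonneg.2 (hk₀ k (mem_univ k))
    calc (v k - v k₀) * (B k j - B k j')
        ≤ (v k - v k₀) * (B k j - min (B k j) (B k j')) :=
          mul_le_mul_of_nonneg_left (sub_le_sub_left (min_le_right _ _) _) hv₀
      _ ≤ c * (B k j - min (B k j) (B k j')) :=
          mul_le_mul_of_nonneg_right (hv k k₀) (sub_nonneg.2 (min_le_left _ _))
  calc (v ᵥ* B) j - (v ᵥ* B) j'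
      ≤ ∑ k, c * (B k j - min (B k j) (B k j')) := hshift ▸ sum_le_sum fun k _ => hterm k
    _ = c * ∑ k, (B k j - min (B k j) (B k j')) := (mul_sum _ _ _).symm
    _ ≤ c * (1 - δ) := mul_le_mul_of_nonneg_left hexcess (by simpa using hv j j)
    _ = (1 - δ) * c := mul_comm _ _

lemma abs_dotProduct_div_sum_sub_avg_le {p x : Fin n → ℝ} {Λ : ℝ} (hp : 0 < ∑ j, p j)
    (hΛ : ∀ j k, p j - p k ≤ Λ) :
    |(p ⬝ᵥ x) / ∑ j, p j - (∑ j, x j) / n| ≤ (∑ j, |x j|) * Λ / ∑ j, p j := by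
  have hn : (0 : ℝ) < n := by
    rcases n.eq_zero_or_pos with rfl | h
    · simp at hp
    · exact_mod_cast h
  have hrow : ∀ j, |∑ k, (p j - p k)| ≤ n * Λ := fun j =>
    calc |∑ k, (p j - p k)| ≤ ∑ k, |p j - p k| := abs_sum_le_sum_abs _ _
      _ ≤ ∑ _k : Fin n, Λ := sum_le_sum fun k _ => abs_sub_le_iff.2 ⟨hΛ j k, hΛ k j⟩
      _ = n * Λ := by simp
  have hexpand : (n : ℝ) * (p ⬝ᵥ x) - (∑ j, x j) * ∑ k, p k
      = ∑ j, x j * ∑ k, (p j - p k) := by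
    have hsum : ∀ j, ∑ k, (p j - p k) = n * p j - ∑ k, p k := fun j => by
      simp [sum_sub_distrib]
    simp only [hsum, mul_sub, sum_sub_distrib, dotProduct, mul_sum, sum_mul]
    rw [sum_comm (f := fun k j => x j * p k)]
    exact congrArg₂ _ (sum_congr rfl fun j _ => by ring) rfl
  have hnum :
      |(n : ℝ) * (p ⬝ᵥ x) - (∑ j, x j) * ∑ k, p k| ≤ (∑ j, |x j|) * (n * Λ) := by
    rw [hexpand, sum_mul]
    refine (abs_sum_le_sum_abs _ _).trans (sum_le_sum fun j _ => ?_)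
    rw [abs_mul]
    exact mul_le_mul_of_nonneg_left (hrow j) (abs_nonneg _)
  calc |(p ⬝ᵥ x) / ∑ j, p j - (∑ j, x j) / n|
      = |((n : ℝ) * (p ⬝ᵥ x) - (∑ j, x j) * ∑ k, p k) / (n * ∑ k, p k)| := by
        congr 1
        field_simp
    _ = |(n : ℝ) * (p ⬝ᵥ x) - (∑ j, x j) * ∑ k, p k| / (n * ∑ k, p k) := by
        rw [abs_div, abs_of_pos (mul_pos hn hp)]
    _ ≤ (∑ j, |x j|) * (n * Λ) / (n * ∑ k, p k) := by gcongr
    _ = (∑ j, |x j|) * Λ / ∑ j, p j := by field_simp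

end Stochastic

section PushSum

variable {n : ℕ} {W : ℕ → Matrix (Fin n) (Fin n) ℝ}

lemma crossesEveryCut_windowProd (hW : ∀ t, NonnegPosDiag (W t)) {s r : ℕ}
    (hflow : ∀ S, NontrivialSubset S → 0 < ∑ t ∈ Ico s r, flowSum (W t) S) :
    CrossesEveryCut (windowProd W s r) := by
  intro S hS
  obtain ⟨t, ht, hflowt⟩ := exists_pos_of_sum_pos (hflow S hS)
  obtain ⟨i, hi, hrow⟩ := exists_pos_of_sum_pos hflowt
  obtain ⟨j, hj, hij⟩ := exists_pos_of_sum_pos hrow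
  obtain ⟨hst, htr⟩ := mem_Ico.1 ht
  refine ⟨i, hi, j, hj, ?_⟩
  have hL := NonnegPosDiag.windowProd hW (t + 1) r
  have hE := NonnegPosDiag.windowProd hW s t
  rw [windowProd_split W (r := t + 1) (by omega) htr, windowProd_succ W hst]
  calc 0 < windowProd W (t + 1) r i i * (W t i j * windowProd W s t j j) :=
        mul_pos (hL.2 i) (mul_pos hij (hE.2 j))
    _ ≤ windowProd W (t + 1) r i i * (W t * windowProd W s t) i j :=
        mul_le_mul_of_nonneg_left (single_le_mul_apply (hW t).1 hE.1 i j j) (hL.1 i i)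
    _ ≤ _ := single_le_mul_apply hL.1 (mul_apply_nonneg (hW t).1 hE.1) i i j

lemma DirectedInfiniteFlow.exists_flow_pos (hflow : DirectedInfiniteFlow W) (s : ℕ) :
    ∃ T, s < T ∧ ∀ S, NontrivialSubset S → 0 < ∑ t ∈ Ico s T, flowSum (W t) S := by
  have hev : ∀ᶠ T in Filter.atTop, ∀ S : {S : Finset (Fin n) // NontrivialSubset S},
      ∑ t ∈ range s, flowSum (W t) S < ∑ t ∈ range T, flowSum (W t) S :=
    Filter.eventually_all.2 fun S => (hflow S.1 S.2).eventually_gt_atTop _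
  obtain ⟨T, hT, hsT⟩ := (hev.and (Filter.eventually_gt_atTop s)).exists
  refine ⟨T, hsT, fun S hS => ?_⟩
  have := hT ⟨S, hS⟩
  rw [← sum_range_add_sum_Ico _ hsT.le] at this
  linarith

@[simp]
lemma kSeq_zero : kSeq W 0 = 0 := rfl

lemma kSeq_succ_spec (hflow : DirectedInfiniteFlow W) (q : ℕ) :
    kSeq W q < kSeq W (q + 1) ∧ ∀ S, NontrivialSubset S →
      0 < ∑ t ∈ Ico (kSeq W q) (kSeq W (q + 1)), flowSum (W t) S :=
  Nat.sInf_mem (hflow.exists_flow_pos (kSeq W q))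

lemma kSeq_strictMono (hflow : DirectedInfiniteFlow W) : StrictMono (kSeq W) :=
  strictMono_nat_of_lt_succ fun q => (kSeq_succ_spec hflow q).1

lemma ellSeq_succ (q : ℕ) : ellSeq W (q + 1) = kSeq W (q * n + n) - kSeq W (q * n) := by
  simp [ellSeq, add_mul]

lemma ellSeq_ne_zero (hn : 0 < n) (hflow : DirectedInfiniteFlow W) {q : ℕ} (hq : 1 ≤ q) :
    ellSeq W q ≠ 0 := by
  obtain ⟨q, rfl⟩ := Nat.exists_eq_add_of_le' hq
  have := kSeq_strictMono hflow (show q * n < q * n + n by omega)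
  rw [ellSeq_succ]
  omega

lemma OutDegreeForm.nonnegPosDiag {A : Matrix (Fin n) (Fin n) ℝ} (h : OutDegreeForm A) :
    NonnegPosDiag A := by
  obtain ⟨N, hN, hA⟩ := h
  refine ⟨fun i j => ?_, fun i => ?_⟩
  · rw [hA]
    split_ifs <;> positivity
  · have := card_pos.2 ⟨i, hN i⟩
    rw [hA, if_pos (hN i)]
    positivity

lemma OutDegreeForm.one_div_le_of_pos {A : Matrix (Fin n) (Fin n) ℝ} (h : OutDegreeForm A)
    {i j : Fin n} (hij : 0 < A i j) : 1 / (n : ℝ) ≤ A i j := by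
  obtain ⟨N, hN, hA⟩ := h
  rw [hA] at hij ⊢
  split_ifs at hij ⊢
  · have hcard := card_le_univ (N j)
    rw [Fintype.card_fin] at hcard
    gcongr
    exact_mod_cast card_pos.2 ⟨j, hN j⟩
  · exact absurd hij (lt_irrefl 0)

lemma windowProd_kSeq_apply_pos (hOD : ∀ t, OutDegreeForm (W t))
    (hflow : DirectedInfiniteFlow W) (a : ℕ) (i j : Fin n) :
    0 < windowProd W (kSeq W a) (kSeq W (a + n)) i j := by
  have hk : Monotone fun q => kSeq W (a + q) :=
    (kSeq_strictMono hflow).monotone.comp fun _ _ h => Nat.add_le_add_left h a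
  have hW q := NonnegPosDiag.windowProd (fun t => (hOD t).nonnegPosDiag)
    (kSeq W (a + q)) (kSeq W (a + q + 1))
  have hblocks : windowProd W (kSeq W a) (kSeq W (a + n)) =
      windowProd (fun q => windowProd W (kSeq W (a + q)) (kSeq W (a + (q + 1)))) 0 n := by
    simpa using windowProd_comp_monotone W hk n.zero_le
  rw [hblocks]
  exact windowProd_apply_pos_of_crossesEveryCut hW
    (fun q => crossesEveryCut_windowProd (fun t => (hOD t).nonnegPosDiag)
      (kSeq_succ_spec hflow (a + q)).2) i j

lemma one_div_pow_ellSeq_le_windowProd (hOD : ∀ t, OutDegreeForm (W t))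
    (hflow : DirectedInfiniteFlow W) (q : ℕ) (i j : Fin n) :
    1 / (n : ℝ) ^ ellSeq W (q + 1) ≤
      windowProd W (kSeq W (q * n)) (kSeq W ((q + 1) * n)) i j := by
  rw [ellSeq_succ, add_one_mul, ← _root_.one_div_pow]
  exact pow_le_windowProd_apply_of_pos (by positivity) (fun t => (hOD t).nonnegPosDiag.1)
    (fun t _ _ => (hOD t).one_div_le_of_pos) ((kSeq_strictMono hflow).monotone (by omega)) i j
    (windowProd_kSeq_apply_pos hOD hflow (q * n) i j)

lemma windowProd_apply_sub_le_prod (hCS : ∀ t, ColStochastic (W t))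
    (hOD : ∀ t, OutDegreeForm (W t)) (hflow : DirectedInfiniteFlow W) {b T : ℕ}
    (hbT : kSeq W (b * n) ≤ T) (i j j' : Fin n) :
    windowProd W 0 T i j - windowProd W 0 T i j' ≤
      ∏ q ∈ Ioc 0 b, (1 - 1 / (n : ℝ) ^ ellSeq W q) := by
  have hk := (kSeq_strictMono hflow).monotone
  suffices h : ∀ a ≤ b, ∀ j j',
      windowProd W (kSeq W (a * n)) T i j - windowProd W (kSeq W (a * n)) T i j' ≤
        ∏ q ∈ Ioc a b, (1 - 1 / (n : ℝ) ^ ellSeq W q) by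
    simpa using h 0 b.zero_le j j'
  intro a hab
  induction hab using Nat.decreasingInduction with
  | self =>
    intro j j'
    have hP := ColStochastic.windowProd hCS (kSeq W (b * n)) T
    simpa using sub_le_sub (hP.apply_le_one i j) (hP.1 i j')
  | of_succ a hab ih =>
    intro j j'
    have hsplit := windowProd_split W (hk (Nat.mul_le_mul_right n a.le_succ))
      ((hk (Nat.mul_le_mul_right n hab)).trans hbT)
    rw [hsplit, mul_apply_eq_vecMul,
      ← insert_Ioc_add_one_left_eq_Ioc hab, prod_insert (by simp)]
    exact vecMul_sub_vecMul_le (ColStochastic.windowProd hCS _ _)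
      (one_div_pow_ellSeq_le_windowProd hOD hflow a) ih j j'

lemma exists_QSet_zero_eq_Ioc (hflow : DirectedInfiniteFlow W) (t : ℕ) :
    ∃ b, kSeq W (b * n) ≤ t ∧ QSet W t 0 = Ioc 0 b := by
  classical
  set b := Nat.findGreatest (fun q => kSeq W (q * n) ≤ t) t
  have hb : kSeq W (b * n) ≤ t :=
    Nat.findGreatest_spec (P := fun q => kSeq W (q * n) ≤ t) (m := 0) t.zero_le (by simp)
  refine ⟨b, hb, ?_⟩
  ext q
  simp only [QSet, mem_filter, mem_Icc, mem_Ioc, zero_le, true_and]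
  constructor
  · rintro ⟨⟨hq, hqt⟩, hkq⟩
    exact ⟨hq, Nat.le_findGreatest hqt hkq⟩
  · rintro ⟨hq, hqb⟩
    exact ⟨⟨hq, hqb.trans (Nat.findGreatest_le t)⟩,
      ((kSeq_strictMono hflow).monotone (Nat.mul_le_mul_right n hqb)).trans hb⟩

end PushSum

lemma one_sub_one_div_pow_mem_Ioo {x : ℝ} (hx : 1 < x) {m : ℕ} (hm : m ≠ 0) :
    0 < 1 - 1 / x ^ m ∧ 1 - 1 / x ^ m < 1 := by
  have hxm := one_lt_pow₀ hx hm
  have : 1 / x ^ m < 1 := (div_lt_one (by positivity)).2 hxm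
  have : 0 < 1 / x ^ m := by positivity
  constructor <;> linarith

/-- Push-sum error bound: for column-stochastic out-degree-form matrices
with the directed infinite flow property,
`|z_i(t+1) - x̄| ≤ (2‖x(0)‖₁ / y_i(t+1)) Λ_{t,0}`, with each factor of `Λ` in `(0,1)`. -/
theorem pushsum_error_bound {n : ℕ} (hn : 2 ≤ n)
    (W : ℕ → Matrix (Fin n) (Fin n) ℝ)
    (hCS : ∀ t, ColStochastic (W t))
    (hOD : ∀ t, OutDegreeForm (W t))
    (hflow : DirectedInfiniteFlow W)
    (x0 : Fin n → ℝ) :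
    (∀ q : ℕ, 1 ≤ q →
      (0:ℝ) < 1 - 1 / (n : ℝ) ^ (ellSeq W q) ∧ 1 - 1 / (n : ℝ) ^ (ellSeq W q) < 1) ∧
    ∀ (t : ℕ) (i : Fin n),
      |pushIter W x0 (t + 1) i / pushIter W (fun _ => 1) (t + 1) i
          - (∑ j, x0 j) / n|
        ≤ 2 * (∑ j, |x0 j|) / pushIter W (fun _ => 1) (t + 1) i * Lam W t 0 := by
  refine ⟨fun q hq => one_sub_one_div_pow_mem_Ioo (by exact_mod_cast hn)
    (ellSeq_ne_zero (by omega) hflow hq), fun t i => ?_⟩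
  obtain ⟨b, hbt, hQ⟩ := exists_QSet_zero_eq_Ioc hflow t
  rw [pushIter_eq_windowProd_mulVec, pushIter_eq_windowProd_mulVec]
  set P := windowProd W 0 (t + 1)
  have hspread : ∀ j k, P i j - P i k ≤ Lam W t 0 := by
    simpa only [Lam, hQ] using
      windowProd_apply_sub_le_prod hCS hOD hflow (hbt.trans t.le_succ) i
  have hP : NonnegPosDiag P :=
    NonnegPosDiag.windowProd (fun s => (hOD s).nonnegPosDiag) 0 (t + 1)
  have hy : 0 < ∑ j, P i j := hP.sum_apply_pos i
  have hbound : 0 ≤ (∑ j, |x0 j|) * Lam W t 0 / ∑ j, P i j := by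
    have hΛ : 0 ≤ Lam W t 0 := by simpa using hspread i i
    positivity
  rw [show (P *ᵥ fun _ => 1) i = ∑ j, P i j from dotProduct_one (P i)]
  calc |(P *ᵥ x0) i / ∑ j, P i j - (∑ j, x0 j) / n|
      ≤ (∑ j, |x0 j|) * Lam W t 0 / ∑ j, P i j := abs_dotProduct_div_sum_sub_avg_le hy hspread
    _ ≤ 2 * (∑ j, |x0 j|) / (∑ j, P i j) * Lam W t 0 := by
      linarith [show 2 * (∑ j, |x0 j|) / (∑ j, P i j) * Lam W t 0
        = 2 * ((∑ j, |x0 j|) * Lam W t 0 / ∑ j, P i j) by ring]
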